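/- Let (G,σ) be a properly vertex-colored digraph with vertex set L that is sf-colored and such that R^bin(G,σ) is consistent. Then the leaf-colored tree (Aho(R^bin(G,σ),L),σ) and every refinement of it explains (G,σ). -/

import Mathlib

/-- A rooted phylogenetic tree with leaf set `V`, encoded by its hierarchy of clusters
(the cluster of a vertex is the set of leaves below it; inner vertices of a phylogenetic
tree have at least two children, so vertices correspond bijectively to clusters). -/
structure PhyloTree (V : Type*) where
  clusters : Set (Set V)
  nonempty_of_mem : ∀ A ∈ clusters, A.Nonempty
  univ_mem : Set.univ ∈ clusters
  singleton_mem : ∀ v : V, {v} ∈ clusters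
  nested : ∀ A ∈ clusters, ∀ B ∈ clusters, A ⊆ B ∨ B ⊆ A ∨ Disjoint A B

namespace PhyloTree

variable {V : Type*}

/-- The cluster of the last common ancestor of `x` and `y`: the smallest cluster
containing both (the clusters containing `x` and `y` form a chain, so their
intersection is the smallest one). -/
def lca (T : PhyloTree V) (x y : V) : Set V :=
  ⋂₀ {A | A ∈ T.clusters ∧ x ∈ A ∧ y ∈ A}

/-- The rooted triple `xy|z` (on three pairwise distinct leaves) is displayed by `T`:
`lca(x,y) ≺ lca(x,z) = lca(y,z)`. -/
def Displays (T : PhyloTree V) (x y z : V) : Prop :=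
  x ≠ y ∧ x ≠ z ∧ y ≠ z ∧ T.lca x y ⊂ T.lca x z ∧ T.lca x z = T.lca y z

/-- `T` displays every triple of `R`; a triple `(x, y, z)` encodes `xy|z`. -/
def DisplaysSet (T : PhyloTree V) (R : Set (V × V × V)) : Prop :=
  ∀ t ∈ R, T.Displays t.1 t.2.1 t.2.2

/-- `r(T)`, the set of triples displayed by `T`. -/
def triples (T : PhyloTree V) : Set (V × V × V) :=
  {t | T.Displays t.1 t.2.1 t.2.2}

/-- `T` is binary: every inner vertex (cluster with at least two leaves) has exactly
two children, i.e. splits into two disjoint proper subclusters. -/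
def IsBinary (T : PhyloTree V) : Prop :=
  ∀ A ∈ T.clusters, 1 < A.ncard →
    ∃ B ∈ T.clusters, ∃ D ∈ T.clusters,
      Disjoint B D ∧ B ∪ D = A ∧ B ⊂ A ∧ D ⊂ A

/-- `T'` is a refinement of `T`: they have the same leaf set and `T` is obtained from
`T'` by contracting inner edges, i.e. every cluster of `T` is a cluster of `T'`. -/
def Refines (T' T : PhyloTree V) : Prop :=
  T.clusters ⊆ T'.clusters

end PhyloTree

section BMG

variable {V C : Type*}

/-- `y` is a best match of `x` in the leaf-colored tree `(T,σ)`. -/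
def bestMatch (T : PhyloTree V) (σ : V → C) (x y : V) : Prop :=
  σ x ≠ σ y ∧ ∀ y' : V, σ y' = σ y → T.lca x y ⊆ T.lca x y'

/-- The leaf-colored tree `(T,σ)` explains the vertex-colored digraph `(E,σ)`,
i.e. `(E,σ)` is the best match graph of `(T,σ)`. -/
def Explains (T : PhyloTree V) (σ : V → C) (E : V → V → Prop) : Prop :=
  ∀ x y, E x y ↔ bestMatch T σ x y

/-- `(E,σ)` is a best match graph. -/
def IsBMG (E : V → V → Prop) (σ : V → C) : Prop :=
  ∃ T : PhyloTree V, Explains T σ E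

/-- `(E,σ)` is binary-explainable. -/
def BinaryExplainable (E : V → V → Prop) (σ : V → C) : Prop :=
  ∃ T : PhyloTree V, T.IsBinary ∧ Explains T σ E

/-- The informative triples `R(G,σ)`: `(a,b,b')` encodes `ab|b'`. -/
def informativeTriples (E : V → V → Prop) (σ : V → C) : Set (V × V × V) :=
  {t | σ t.1 ≠ σ t.2.1 ∧ σ t.2.1 = σ t.2.2 ∧ E t.1 t.2.1 ∧ ¬ E t.1 t.2.2}

/-- The forbidden triples `F(G,σ)`: `(a,b,b')` encodes `ab|b'`. -/
def forbiddenTriples (E : V → V → Prop) (σ : V → C) : Set (V × V × V) :=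
  {t | σ t.1 ≠ σ t.2.1 ∧ σ t.2.1 = σ t.2.2 ∧ t.2.1 ≠ t.2.2 ∧ E t.1 t.2.1 ∧ E t.1 t.2.2}

/-- The extended triple set `R^bin(G,σ) = R(G,σ) ∪ {bb'|a : ab|b' ∈ F(G,σ)}`. -/
def Rbin (E : V → V → Prop) (σ : V → C) : Set (V × V × V) :=
  informativeTriples E σ ∪ {t | (t.2.2, t.1, t.2.1) ∈ forbiddenTriples E σ}

/-- Properly colored: arcs only between vertices of distinct colors. -/
def ProperlyColored (E : V → V → Prop) (σ : V → C) : Prop :=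
  ∀ x y, E x y → σ x ≠ σ y

/-- sf-colored: properly colored and every vertex has, for each color (of the graph)
different from its own, at least one out-neighbor of that color. -/
def SfColored (E : V → V → Prop) (σ : V → C) : Prop :=
  ProperlyColored E σ ∧ ∀ x y : V, σ y ≠ σ x → ∃ z, E x z ∧ σ z = σ y

/-- A triple set is consistent if some tree displays all of its triples. -/
def Consistent (R : Set (V × V × V)) : Prop :=
  ∃ T : PhyloTree V, T.DisplaysSet R

/-- The closure `cl(R)`: all triples displayed by every tree displaying `R`. -/
def tripleClosure (R : Set (V × V × V)) : Set (V × V × V) :=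
  {t | ∀ T : PhyloTree V, T.DisplaysSet R → T.Displays t.1 t.2.1 t.2.2}

/-- `(T,σ)` is a least resolved tree for `(E,σ)`: it explains `(E,σ)` and no tree
obtained from it by contracting an edge (i.e. by removing a non-root inner cluster)
explains `(E,σ)`. -/
def IsLRT (T : PhyloTree V) (σ : V → C) (E : V → V → Prop) : Prop :=
  Explains T σ E ∧
    ∀ A ∈ T.clusters, A ≠ Set.univ → 1 < A.ncard →
      ∀ T' : PhyloTree V, T'.clusters = T.clusters \ {A} → ¬ Explains T' σ E

end BMG

section Aho

variable {V : Type*}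

/-- Adjacency in the Aho graph `[R,L]`: `x` and `y` are joined whenever `xy|z ∈ R`
for some `z ∈ L` (only triples with all leaves in `L` are taken into account). -/
def ahoAdj (R : Set (V × V × V)) (L : Set V) (x y : V) : Prop :=
  x ∈ L ∧ y ∈ L ∧ ∃ z ∈ L, (x, y, z) ∈ R ∨ (y, x, z) ∈ R

/-- The vertex set of the connected component of `x` in the Aho graph `[R,L]`. -/
def ahoComponent (R : Set (V × V × V)) (L : Set V) (x : V) : Set V :=
  {y | Relation.ReflTransGen (ahoAdj R L) x y}

/-- The clusters of the Aho tree `Aho(R, V)`: the full leaf set, and recursively the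
connected components of the Aho graphs. -/
inductive IsAhoCluster (R : Set (V × V × V)) : Set V → Prop
  | univ : IsAhoCluster R Set.univ
  | component {L : Set V} {x : V} :
      IsAhoCluster R L → x ∈ L → IsAhoCluster R (ahoComponent R L x)

/-- `T` is the Aho tree (`BUILD` tree) of the triple set `R` on the full leaf set. -/
def IsAhoTree (R : Set (V × V × V)) (T : PhyloTree V) : Prop :=
  T.clusters = {A | IsAhoCluster R A}

/-- The union of the leaf sets of the triples in `R`. -/
def tripleLeaves (R : Set (V × V × V)) : Set V :=
  {v | ∃ t ∈ R, v = t.1 ∨ v = t.2.1 ∨ v = t.2.2}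

end Aho

/-! A tree displaying every triple of `R^bin(G,σ)` already explains `(G,σ)`: an informative
triple `ab|b'` separates the best match `b` of `a` from the non-best match `b'`, the reversed
forbidden triple `bb'|a` puts two best matches of `a` of the same color at the same distance,
and sf-coloredness provides, for every non-arc `(x,y)`, a closer vertex of the color of `y`.
Displaying a triple means having a cluster containing two of its leaves but not the third, so it
passes to refinements. Finally, the Aho tree of a consistent triple set displays the set: the
component of `x` in the Aho graph on `lca(x,z)` is a cluster containing `x` and `y` for every
`xy|z ∈ R`, and it misses `z` because, in a tree displaying `R`, Aho edges never leave the
maximal proper subclusters of the smallest cluster containing the vertex set. -/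

namespace PhyloTree

variable {V : Type*} (T : PhyloTree V)

lemma lca_comm (x y : V) : T.lca x y = T.lca y x := by
  simp only [lca, and_comm (a := x ∈ _)]

lemma left_mem_lca (x y : V) : x ∈ T.lca x y :=
  Set.mem_sInter.2 fun _ hA => hA.2.1

lemma right_mem_lca (x y : V) : y ∈ T.lca x y :=
  Set.mem_sInter.2 fun _ hA => hA.2.2

variable {T} in
lemma lca_subset {A : Set V} (hA : A ∈ T.clusters) {x y : V} (hx : x ∈ A) (hy : y ∈ A) :
    T.lca x y ⊆ A :=
  Set.sInter_subset_of_mem ⟨hA, hx, hy⟩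

lemma subset_of_not_disjoint_of_not_subset {A B : Set V} (hA : A ∈ T.clusters)
    (hB : B ∈ T.clusters) (hAB : ¬Disjoint A B) (hBA : ¬B ⊆ A) : A ⊆ B :=
  (T.nested A hA B hB).resolve_right (not_or_intro hBA hAB)

section Finite

variable [Finite V]

lemma lca_mem_clusters (x y : V) : T.lca x y ∈ T.clusters := by
  obtain ⟨B, -, hB⟩ := Finite.exists_le_minimal
    (p := fun A => A ∈ T.clusters ∧ x ∈ A ∧ y ∈ A) ⟨T.univ_mem, trivial, trivial⟩
  suffices T.lca x y = B from this ▸ hB.prop.1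
  refine (lca_subset hB.prop.1 hB.prop.2.1 hB.prop.2.2).antisymm (Set.subset_sInter ?_)
  intro P hP
  rcases T.nested P hP.1 B hB.prop.1 with h | h | h
  · exact hB.le_of_le hP h
  · exact h
  · exact absurd h (Set.not_disjoint_iff.2 ⟨x, hP.2.1, hB.prop.2.1⟩)

lemma exists_maximal_ssubset_cluster {B : Set V} {x : V} (hxB : {x} ⊂ B) :
    ∃ D ∈ T.clusters, x ∈ D ∧ D ⊂ B ∧
      ∀ P ∈ T.clusters, P ⊂ B → ¬Disjoint P D → P ⊆ D := by
  obtain ⟨D, -, hD⟩ := Finite.exists_le_maximal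
    (p := fun D => D ∈ T.clusters ∧ x ∈ D ∧ D ⊂ B) ⟨T.singleton_mem x, rfl, hxB⟩
  refine ⟨D, hD.prop.1, hD.prop.2.1, hD.prop.2.2, fun P hP hPB hPD => ?_⟩
  by_contra hPD'
  have hDP := T.subset_of_not_disjoint_of_not_subset hD.prop.1 hP
    (fun h => hPD h.symm) hPD'
  exact hPD' (hD.le_of_ge ⟨hP, hDP hD.prop.2.1, hPB⟩ hDP)

lemma displays_iff {x y z : V} :
    T.Displays x y z ↔
      x ≠ y ∧ x ≠ z ∧ y ≠ z ∧ ∃ A ∈ T.clusters, x ∈ A ∧ y ∈ A ∧ z ∉ A := by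
  refine and_congr_right fun _ => and_congr_right fun _ => and_congr_right fun _ => ?_
  constructor
  · rintro ⟨hlt, -⟩
    refine ⟨T.lca x y, T.lca_mem_clusters x y, T.left_mem_lca x y, T.right_mem_lca x y, ?_⟩
    exact fun hz => hlt.not_subset (lca_subset (T.lca_mem_clusters x y) (T.left_mem_lca x y) hz)
  · rintro ⟨A, hA, hx, hy, hz⟩
    have hAz : ∀ w ∈ A, A ⊆ T.lca w z := fun w hw =>
      T.subset_of_not_disjoint_of_not_subset hA (T.lca_mem_clusters w z)
        (Set.not_disjoint_iff.2 ⟨w, hw, T.left_mem_lca w z⟩)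
        (fun h => hz (h (T.right_mem_lca w z)))
    refine ⟨(lca_subset hA hx hy).trans_ssubset ?_, ?_⟩
    · exact (hAz x hx).ssubset_of_not_subset fun h => hz (h (T.right_mem_lca x z))
    · exact (lca_subset (T.lca_mem_clusters y z) (hAz y hy hx) (T.right_mem_lca y z)).antisymm
        (lca_subset (T.lca_mem_clusters x z) (hAz x hx hy) (T.right_mem_lca x z))

variable {T}

lemma DisplaysSet.of_refines {T' : PhyloTree V} {R : Set (V × V × V)} (hT' : T'.Refines T)
    (h : T.DisplaysSet R) : T'.DisplaysSet R := fun t ht => by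
  obtain ⟨hxy, hxz, hyz, A, hA, hAt⟩ := T.displays_iff.1 (h t ht)
  exact T'.displays_iff.2 ⟨hxy, hxz, hyz, A, hT' hA, hAt⟩

end Finite

end PhyloTree

section Aho

variable {V : Type*} {R : Set (V × V × V)}

lemma mem_ahoComponent_self (L : Set V) (x : V) : x ∈ ahoComponent R L x :=
  Relation.ReflTransGen.refl

lemma ahoComponent_subset {L : Set V} {x : V} (hx : x ∈ L) : ahoComponent R L x ⊆ L := by
  intro y hy
  induction hy with
  | refl => exact hx
  | tail _ hadj _ => exact hadj.2.1

lemma IsAhoCluster.mem_of_triple {A : Set V} (hA : IsAhoCluster R A) {x y z : V}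
    (ht : (x, y, z) ∈ R) (hx : x ∈ A) (hz : z ∈ A) : y ∈ A := by
  induction hA with
  | univ => trivial
  | @component L w _ hw ih =>
    have hsub := ahoComponent_subset (R := R) hw
    exact .tail hx ⟨hsub hx, ih (hsub hx) (hsub hz), z, hsub hz, .inl ht⟩

lemma Consistent.not_subset_ahoComponent [Finite V] (hR : Consistent R) {A : Set V} {x z : V}
    (hx : x ∈ A) (hz : z ∈ A) (hxz : x ≠ z) : ¬A ⊆ ahoComponent R A x := by
  obtain ⟨S, hS⟩ := hR
  obtain ⟨B, -, hB⟩ := Finite.exists_le_minimal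
    (p := fun B => B ∈ S.clusters ∧ A ⊆ B) ⟨S.univ_mem, Set.subset_univ A⟩
  obtain ⟨hBc, hAB⟩ := hB.prop
  obtain ⟨D, hD, hxD, hDB, hDmax⟩ := S.exists_maximal_ssubset_cluster (B := B)
    ⟨Set.singleton_subset_iff.2 (hAB hx), fun h => hxz (h (hAB hz)).symm⟩
  have hstep : ∀ u v, u ∈ D → ahoAdj R A u v → v ∈ D := by
    rintro u v huD ⟨hu, hv, w, hw, ht | ht⟩
    all_goals
      refine hDmax _ (S.lca_mem_clusters u v) ?_
        (Set.not_disjoint_iff.2 ⟨u, S.left_mem_lca u v, huD⟩) (S.right_mem_lca u v)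
    · exact (hS _ ht).2.2.2.1.trans_subset (PhyloTree.lca_subset hBc (hAB hu) (hAB hw))
    · rw [S.lca_comm]
      exact (hS _ ht).2.2.2.1.trans_subset (PhyloTree.lca_subset hBc (hAB hv) (hAB hw))
  intro hA
  have hcomp : ahoComponent R A x ⊆ D := fun y hy => by
    induction hy with
    | refl => exact hxD
    | tail _ hadj ih => exact hstep _ _ ih hadj
  exact hDB.not_subset (hB.le_of_le ⟨hD, hA.trans hcomp⟩ hDB.subset)

lemma IsAhoTree.displaysSet [Finite V] {T : PhyloTree V} (hT : IsAhoTree R T)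
    (hR : Consistent R) : T.DisplaysSet R := by
  rintro ⟨x, y, z⟩ ht
  obtain ⟨hxy, hxz, hyz, -⟩ := hR.choose_spec _ ht
  have hA : IsAhoCluster R (T.lca x z) := (Set.ext_iff.1 hT _).1 (T.lca_mem_clusters x z)
  have hx := T.left_mem_lca x z
  have hz := T.right_mem_lca x z
  have hC : ahoComponent R (T.lca x z) x ∈ T.clusters := (Set.ext_iff.1 hT _).2 (hA.component hx)
  refine T.displays_iff.2 ⟨hxy, hxz, hyz, _, hC, mem_ahoComponent_self _ x,
    .single ⟨hx, hA.mem_of_triple ht hx hz, z, hz, .inl ht⟩, fun hzC => ?_⟩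
  exact hR.not_subset_ahoComponent hx hz hxz
    (PhyloTree.lca_subset hC (mem_ahoComponent_self _ x) hzC)

end Aho

lemma explains_of_displaysSet_rbin {V C : Type*} {E : V → V → Prop} {σ : V → C}
    (hsf : SfColored E σ) {T : PhyloTree V} (hT : T.DisplaysSet (Rbin E σ)) :
    Explains T σ E := by
  intro x y
  refine ⟨fun hxy => ⟨hsf.1 x y hxy, fun y' hy' => ?_⟩, fun ⟨hne, hmin⟩ => ?_⟩
  · by_cases hyy' : y = y'
    · rw [hyy']
    by_cases hxy' : E x y'
    · have hyy'x := hT (y, y', x) (.inr ⟨hsf.1 x y hxy, hy'.symm, hyy', hxy, hxy'⟩)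
      rw [T.lca_comm x y, hyy'x.2.2.2.2, T.lca_comm]
    · exact (hT (x, y, y') (.inl ⟨hsf.1 x y hxy, hy'.symm, hxy, hxy'⟩)).2.2.2.1.subset
  · by_contra hxy
    obtain ⟨z, hxz, hzy⟩ := hsf.2 x y hne.symm
    have hxzy := hT (x, z, y) (.inl ⟨fun h => hne (h.trans hzy), hzy, hxz, hxy⟩)
    exact hxzy.2.2.2.1.not_subset (hmin z hzy)

/-- Theorem: Rbin-MAIN, second part.
Let `(G,σ)` be a properly vertex-colored digraph with vertex set `L` that is sf-colored
and such that `R^bin(G,σ)` is consistent. Then the leaf-colored tree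
`(Aho(R^bin(G,σ),L),σ)` and every refinement of it explains `(G,σ)`. -/
theorem stmt4 {V C : Type*} [Fintype V] (E : V → V → Prop) (σ : V → C)
    (hsf : SfColored E σ) (hcons : Consistent (Rbin E σ))
    (T : PhyloTree V) (hT : IsAhoTree (Rbin E σ) T) :
    Explains T σ E ∧ ∀ T' : PhyloTree V, T'.Refines T → Explains T' σ E := by
  have hdisp : T.DisplaysSet (Rbin E σ) := hT.displaysSet hcons
  exact ⟨explains_of_displaysSet_rbin hsf hdisp,
    fun T' hT' => explains_of_displaysSet_rbin hsf (hdisp.of_refines hT')⟩
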